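/- Every set X ⊆ 2^ω satisfying: for every corset f there are countably many trees S_m, each almost of width f, with X ⊆ ⋃_m (Lim S_m)^{fin} — is meager-additive. -/

import Mathlib

open MeasureTheory Pointwise

/-- Cantor space `2^ω` with componentwise addition mod 2. -/
abbrev Cantor : Type := ℕ → ZMod 2
/-- Finite binary sequences, the nodes of `2^{<ω}`. -/
abbrev FinSeq : Type := List (ZMod 2)

instance : TopologicalSpace (ZMod 2) := ⊥
instance : DiscreteTopology (ZMod 2) := ⟨rfl⟩
noncomputable instance : MeasurableSpace Cantor := borel Cantor
instance : BorelSpace Cantor := ⟨rfl⟩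

/-- The uniform (Lebesgue) product measure on `2^ω`, realized as the Haar measure of the
compact group `2^ω` normalized so that the whole space has measure 1. -/
noncomputable def μC : Measure Cantor := Measure.addHaarMeasure ⊤

/-- `X` is null-additive: `X + A` is null for every null `A`. -/
def NullAdditive (X : Set Cantor) : Prop := ∀ A : Set Cantor, μC A = 0 → μC (X + A) = 0

/-- `X` is meager-additive: `X + A` is meager for every meager `A`. -/
def MeagerAdditive (X : Set Cantor) : Prop := ∀ A : Set Cantor, IsMeagre A → IsMeagre (X + A)

/-- A tree on `2^{<ω}`: nonempty, closed under initial segments, and every node has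
extensions in the tree of every greater length. -/
def IsTree (T : Set FinSeq) : Prop :=
  T.Nonempty ∧ (∀ σ τ : FinSeq, σ <+: τ → τ ∈ T → σ ∈ T) ∧
    ∀ σ ∈ T, ∀ n, σ.length < n → ∃ τ ∈ T, σ <+: τ ∧ τ.length = n

/-- Restriction `x↾n` of `x ∈ 2^ω`. -/
def res (x : Cantor) (n : ℕ) : FinSeq := (List.range n).map x

/-- `Lim T = {x ∈ 2^ω : ∀ n, x↾n ∈ T}`. -/
def LimT (T : Set FinSeq) : Set Cantor := {x | ∀ n, res x n ∈ T}

/-- A nowhere dense tree: every node has an extension outside the tree. -/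
def NwdTree (T : Set FinSeq) : Prop := ∀ η ∈ T, ∃ τ : FinSeq, η <+: τ ∧ τ ∉ T

/-- Componentwise mod-2 addition of finite sequences (of the same length). -/
def finAdd : FinSeq → FinSeq → FinSeq := List.zipWith (· + ·)

/-- `T + S = {η + σ : η ∈ T, σ ∈ S, same length}`. -/
def treeSum (T S : Set FinSeq) : Set FinSeq :=
  {ρ | ∃ η ∈ T, ∃ σ ∈ S, η.length = σ.length ∧ ρ = finAdd η σ}

/-- `T^{[η]} = {τ ∈ T : τ ⊑ η or η ⊑ τ}`. -/
def through (T : Set FinSeq) (η : FinSeq) : Set FinSeq := {τ ∈ T | τ <+: η ∨ η <+: τ}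

/-- `A^{fin}`: points agreeing with some point of `A` at all but finitely many coordinates. -/
def finEq (A : Set Cantor) : Set Cantor := {y | ∃ x ∈ A, ∀ᶠ n in Filter.atTop, y n = x n}

/-- `U^{⟨ν⟩} = {τ : ν⌢τ ∈ U}`. -/
def above (U : Set FinSeq) (ν : FinSeq) : Set FinSeq := {τ | ν ++ τ ∈ U}

/-- A corset: a nondecreasing function `ω → ω \ {0}` tending to infinity. -/
def Corset (f : ℕ → ℕ) : Prop :=
  Monotone f ∧ (∀ n, 0 < f n) ∧ Filter.Tendsto f Filter.atTop Filter.atTop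

/-- `S` is of width `f`: `|S ∩ 2^n| ≤ f n` for all `n`. -/
def widthLe (S : Set FinSeq) (f : ℕ → ℕ) : Prop := ∀ n, {τ ∈ S | τ.length = n}.ncard ≤ f n

/-- `S` is almost of width `f`: `|S ∩ 2^n| ≤ f n` for all sufficiently large `n`. -/
def almostWidthLe (S : Set FinSeq) (f : ℕ → ℕ) : Prop :=
  ∀ᶠ n in Filter.atTop, {τ ∈ S | τ.length = n}.ncard ≤ f n

/-! Write the meager set `A` as `⋃ j, M j` with every `M j` nowhere dense. Choose checkpoints
`n 0 < n 1 < ⋯` so sparse that for `j ≤ k` every node of length `n k` extends to a node of length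
`n (k + 1)` whose cylinder misses `M j`, and a corset `f` so slow that `f (n k) ≤ k / 2 + 1`.
For a tree `S` almost of width `f`, each round between consecutive checkpoints lets a node `ρ` kill
one more node `σ` of `S` (`[ρ + σ]` misses `M j`), and killed nodes stay killed along `S`. As `S`
eventually has fewer than `k₀ + 3` nodes at level `n (2 * k₀ + 3)`, every node of length `n k₀`
extends to one killing all nodes of `S` of its length, and the cylinder of such a node misses
`Lim S + M j`: this set is nowhere dense. Finally
`(Lim S)^{fin}` is covered by countably many translates of `Lim S`, so `X + A` is covered by
countably many translates of the nowhere dense sets `Lim S_m + M_j`. -/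

open Filter Set

@[simp] lemma res_length (x : Cantor) (n : ℕ) : (res x n).length = n := by
  simp [res]

lemma res_eq_res_iff {x y : Cantor} {n : ℕ} : res y n = res x n ↔ ∀ i < n, y i = x i := by
  simp [res, List.map_inj_left]

lemma res_take (x : Cantor) {m n : ℕ} (h : m ≤ n) : (res x n).take m = res x m := by
  rw [res, res, ← List.map_take, List.take_range, Nat.min_eq_left h]

lemma res_prefix (x : Cantor) {m n : ℕ} (h : m ≤ n) : res x m <+: res x n := by
  rw [← res_take x h]
  exact List.take_prefix _ _

lemma exists_prefix_length_eq (ρ : FinSeq) {L : ℕ} (h : ρ.length ≤ L) :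
    ∃ τ, ρ <+: τ ∧ τ.length = L :=
  ⟨ρ ++ List.replicate (L - ρ.length) 0, List.prefix_append _ _, by simp; omega⟩

def extendZero (ρ : FinSeq) : Cantor := fun i => ρ.getD i 0

lemma res_extendZero (ρ : FinSeq) : res (extendZero ρ) ρ.length = ρ := by
  refine List.ext_getElem (by simp) fun i _ hi => ?_
  simp [res, extendZero, List.getElem?_eq_getElem hi]

def cyl (ρ : FinSeq) : Set Cantor := {x | res x ρ.length = ρ}

lemma cyl_res (x : Cantor) (n : ℕ) : cyl (res x n) = PiNat.cylinder x n := by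
  ext y
  simp [cyl, res_eq_res_iff]

lemma cyl_eq_cylinder (ρ : FinSeq) : cyl ρ = PiNat.cylinder (extendZero ρ) ρ.length := by
  have h := cyl_res (extendZero ρ) ρ.length
  rwa [res_extendZero] at h

lemma isOpen_cyl (ρ : FinSeq) : IsOpen (cyl ρ) := by
  rw [cyl_eq_cylinder]
  exact PiNat.isOpen_cylinder (fun _ => ZMod 2) _ _

lemma cyl_nonempty (ρ : FinSeq) : (cyl ρ).Nonempty := ⟨extendZero ρ, res_extendZero ρ⟩

lemma cyl_anti {σ τ : FinSeq} (h : σ <+: τ) : cyl τ ⊆ cyl σ := by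
  intro x (hx : res x τ.length = τ)
  rw [cyl, mem_ofPred_eq, ← res_take x h.length_le, hx, ← List.prefix_iff_eq_take.mp h]

lemma exists_cyl_res_subset {U : Set Cantor} (hU : IsOpen U) {x : Cantor} (hx : x ∈ U) :
    ∃ n, cyl (res x n) ⊆ U := by
  obtain ⟨_, ⟨y, n, rfl⟩, hxy, hU⟩ :=
    (PiNat.isTopologicalBasis_cylinders fun _ => ZMod 2).exists_subset_of_mem_open hx hU
  exact ⟨n, by rwa [cyl_res, PiNat.mem_cylinder_iff_eq.mp hxy]⟩

lemma isNowhereDense_iff_exists_disjoint_cyl {B : Set Cantor} :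
    IsNowhereDense B ↔ ∀ ρ : FinSeq, ∃ τ, ρ <+: τ ∧ Disjoint (cyl τ) B := by
  constructor
  · intro hB ρ
    obtain ⟨x, hxρ, hxB⟩ : ∃ x ∈ cyl ρ, x ∉ closure B := by
      by_contra! hsub
      have := interior_maximal hsub (isOpen_cyl ρ)
      rw [hB] at this
      exact (cyl_nonempty ρ).not_subset_empty this
    obtain ⟨n, hn⟩ := exists_cyl_res_subset isClosed_closure.isOpen_compl hxB
    refine ⟨res x (max n ρ.length), ?_, ?_⟩
    · conv_lhs => rw [← show res x ρ.length = ρ from hxρ]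
      exact res_prefix x (le_max_right _ _)
    · exact subset_compl_iff_disjoint_right.mp ((cyl_anti (res_prefix x (le_max_left _ _))).trans
        (hn.trans (compl_subset_compl.mpr subset_closure)))
  · intro hB
    refine eq_empty_iff_forall_notMem.mpr fun x hx => ?_
    obtain ⟨n, hn⟩ := exists_cyl_res_subset isOpen_interior hx
    obtain ⟨τ, hτ, hdisj⟩ := hB (res x n)
    have hsub : cyl τ ⊆ closure B := (cyl_anti hτ).trans (hn.trans interior_subset)
    exact (cyl_nonempty τ).ne_empty ((hdisj.closure_right (isOpen_cyl τ)).eq_bot_of_le hsub)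

@[simp] lemma finAdd_length (a b : FinSeq) : (finAdd a b).length = min a.length b.length := by
  simp [finAdd]

lemma finAdd_take (a b : FinSeq) (n : ℕ) :
    (finAdd a b).take n = finAdd (a.take n) (b.take n) := by
  simp [finAdd, List.take_zipWith]

lemma finAdd_finAdd_cancel_right {a b : FinSeq} (h : a.length = b.length) :
    finAdd (finAdd a b) b = a := by
  refine List.ext_getElem (by simp [h]) fun i _ _ => ?_
  simp [finAdd, add_assoc, CharTwo.add_self_eq_zero]

lemma res_add (x y : Cantor) (n : ℕ) : res (x + y) n = finAdd (res x n) (res y n) := by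
  refine List.ext_getElem (by simp) fun i _ _ => ?_
  simp [finAdd, res]

lemma finAdd_prefix {ρ ρ' σ σ' : FinSeq} (hρ : ρ <+: ρ') (hσ : σ <+: σ')
    (hl : σ.length = ρ.length) : finAdd ρ σ <+: finAdd ρ' σ' := by
  rw [List.prefix_iff_eq_take, finAdd_length, hl, min_self, finAdd_take,
    ← List.prefix_iff_eq_take.mp hρ, ← hl, ← List.prefix_iff_eq_take.mp hσ]

/-- `ρ` kills `σ` when `[ρ + σ]` misses `M`, that is, when `[ρ]` misses `[σ] + M`. -/
def killedBy (S : Set FinSeq) (M : Set Cantor) (ρ : FinSeq) : Set FinSeq :=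
  {σ ∈ S | σ.length = ρ.length ∧ Disjoint (cyl (finAdd ρ σ)) M}

def KillsAll (S : Set FinSeq) (M : Set Cantor) (ρ : FinSeq) : Prop :=
  ∀ σ ∈ S, σ.length = ρ.length → σ ∈ killedBy S M ρ

lemma killedBy_finite (S : Set FinSeq) (M : Set Cantor) (ρ : FinSeq) :
    (killedBy S M ρ).Finite :=
  (List.finite_length_eq _ ρ.length).subset fun _ hσ => hσ.2.1

section Killing

variable {S : Set FinSeq} {M : Set Cantor}

lemma mem_killedBy_of_prefix {ρ ρ' σ σ' : FinSeq} (hσ : σ ∈ killedBy S M ρ) (hρ : ρ <+: ρ')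
    (hσσ' : σ <+: σ') (hσ'S : σ' ∈ S) (hlen : σ'.length = ρ'.length) :
    σ' ∈ killedBy S M ρ' :=
  ⟨hσ'S, hlen, hσ.2.2.mono_left (cyl_anti (finAdd_prefix hρ hσσ' hσ.2.1))⟩

lemma KillsAll.of_prefix (hS : IsTree S) {ρ ρ' : FinSeq} (h : KillsAll S M ρ) (hρ : ρ <+: ρ') :
    KillsAll S M ρ' := by
  intro σ' hσ'S hlen
  have hle : ρ.length ≤ σ'.length := hlen ▸ hρ.length_le
  have hσ : σ'.take ρ.length ∈ killedBy S M ρ :=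
    h _ (hS.2.1 _ _ (List.take_prefix _ _) hσ'S) (by simpa using hle)
  exact mem_killedBy_of_prefix hσ hρ (List.take_prefix _ _) hσ'S hlen

/-- Nodes killed at `ρ` extend along `S` to nodes killed at `ρ'`, and restriction inverts this
extension, so `σ'` is a killed node beyond its image. -/
lemma ncard_killedBy_lt (hS : IsTree S) {ρ ρ' σ' : FinSeq} (hρ : ρ <+: ρ')
    (hlen : ρ.length < ρ'.length) (hσ' : σ' ∈ killedBy S M ρ')
    (hnew : σ'.take ρ.length ∉ killedBy S M ρ) :
    (killedBy S M ρ).ncard < (killedBy S M ρ').ncard := by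
  set D := {σ ∈ killedBy S M ρ' | σ.take ρ.length ∈ killedBy S M ρ}
  have hDfin : D.Finite := (killedBy_finite S M ρ').subset (sep_subset _ _)
  have hcover : killedBy S M ρ ⊆ (List.take ρ.length) '' D := by
    intro σ hσ
    obtain ⟨σ'', hσ''S, hσσ'', hσ''len⟩ := hS.2.2 σ hσ.1 ρ'.length (hσ.2.1 ▸ hlen)
    have htake : σ''.take ρ.length = σ := by
      rw [← hσ.2.1, ← List.prefix_iff_eq_take.mp hσσ'']
    exact ⟨σ'', ⟨mem_killedBy_of_prefix hσ hρ hσσ'' hσ''S hσ''len, htake ▸ hσ⟩, htake⟩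
  have hssub : D ⊂ killedBy S M ρ' :=
    (ssubset_iff_of_subset (sep_subset _ _)).mpr ⟨σ', hσ', fun h => hnew h.2⟩
  calc (killedBy S M ρ).ncard ≤ ((List.take ρ.length) '' D).ncard :=
        ncard_le_ncard hcover (hDfin.image _)
    _ ≤ D.ncard := ncard_image_le hDfin
    _ < (killedBy S M ρ').ncard := ncard_lt_ncard hssub (killedBy_finite S M ρ')

lemma exists_prefix_ncard_killedBy_lt (hS : IsTree S) {ρ : FinSeq} {L : ℕ} (hL : ρ.length < L)
    (hext : ∀ π : FinSeq, π.length = ρ.length → ∃ τ, π <+: τ ∧ τ.length = L ∧ Disjoint (cyl τ) M)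
    (h : ¬ KillsAll S M ρ) :
    ∃ ρ', ρ <+: ρ' ∧ ρ'.length = L ∧ (killedBy S M ρ).ncard < (killedBy S M ρ').ncard := by
  simp only [KillsAll, not_forall] at h
  obtain ⟨σ, hσS, hσlen, hσ⟩ := h
  obtain ⟨τ, hτ, hτlen, hτM⟩ := hext (finAdd ρ σ) (by simp [hσlen])
  obtain ⟨σ', hσ'S, hσσ', hσ'len⟩ := hS.2.2 σ hσS L (hσlen ▸ hL)
  have hσ'take : σ'.take ρ.length = σ := by rw [← hσlen, ← List.prefix_iff_eq_take.mp hσσ']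
  have hτtake : τ.take ρ.length = finAdd ρ σ := by
    simpa [hσlen] using (List.prefix_iff_eq_take.mp hτ).symm
  have hρ : ρ <+: finAdd τ σ' := by
    rw [List.prefix_iff_eq_take, finAdd_take, hτtake, hσ'take,
      finAdd_finAdd_cancel_right hσlen.symm]
  have hkilled : σ' ∈ killedBy S M (finAdd τ σ') :=
    ⟨hσ'S, by simp [hτlen, hσ'len],
      by rwa [finAdd_finAdd_cancel_right (hτlen.trans hσ'len.symm)]⟩
  exact ⟨finAdd τ σ', hρ, by simp [hτlen, hσ'len],
    ncard_killedBy_lt hS hρ (by simp [hτlen, hσ'len, hL]) hkilled (hσ'take ▸ hσ)⟩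

lemma exists_prefix_killsAll (hS : IsTree S) {n : ℕ → ℕ} (hn : StrictMono n) {k₀ T : ℕ}
    (hext : ∀ k, k₀ ≤ k → ∀ π : FinSeq, π.length = n k →
      ∃ τ, π <+: τ ∧ τ.length = n (k + 1) ∧ Disjoint (cyl τ) M)
    (hwidth : {σ ∈ S | σ.length = n (k₀ + T)}.ncard < T) {ρ₀ : FinSeq}
    (hρ₀ : ρ₀.length = n k₀) :
    ∃ ρ, ρ₀ <+: ρ ∧ ρ.length = n (k₀ + T) ∧ KillsAll S M ρ := by
  have progress : ∀ t, ∃ ρ, ρ₀ <+: ρ ∧ ρ.length = n (k₀ + t) ∧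
      (KillsAll S M ρ ∨ t ≤ (killedBy S M ρ).ncard) := by
    intro t
    induction t with
    | zero => exact ⟨ρ₀, List.prefix_refl _, hρ₀, Or.inr (Nat.zero_le _)⟩
    | succ t ih =>
      obtain ⟨ρ, hρ₀ρ, hρlen, hρ⟩ := ih
      have hlt : ρ.length < n (k₀ + (t + 1)) := hρlen ▸ hn (by omega)
      by_cases hkill : KillsAll S M ρ
      · obtain ⟨ρ', hρρ', hρ'len⟩ := exists_prefix_length_eq ρ hlt.le
        exact ⟨ρ', hρ₀ρ.trans hρρ', hρ'len, Or.inl (hkill.of_prefix hS hρρ')⟩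
      · obtain ⟨ρ', hρρ', hρ'len, hlt'⟩ := exists_prefix_ncard_killedBy_lt hS hlt
          (fun π hπ => hext (k₀ + t) (by omega) π (hπ.trans hρlen)) hkill
        exact ⟨ρ', hρ₀ρ.trans hρρ', hρ'len, Or.inr (by have := hρ.resolve_left hkill; omega)⟩
  obtain ⟨ρ, hρ₀ρ, hρlen, hρ | hρ⟩ := progress T
  · exact ⟨ρ, hρ₀ρ, hρlen, hρ⟩
  · have hsub : killedBy S M ρ ⊆ {σ ∈ S | σ.length = n (k₀ + T)} :=
      fun σ hσ => ⟨hσ.1, hσ.2.1.trans hρlen⟩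
    have := ncard_le_ncard hsub ((List.finite_length_eq _ _).subset fun _ hσ => hσ.2)
    omega

lemma KillsAll.disjoint_cyl_limT_add {ρ : FinSeq} (h : KillsAll S M ρ) :
    Disjoint (cyl ρ) (LimT S + M) := by
  rw [disjoint_left]
  rintro y (hy : res y ρ.length = ρ) ⟨x, hx, m, hm, rfl⟩
  have hmx : m = (x + m) + x := by
    rw [add_comm x m, add_assoc, CharTwo.add_self_eq_zero, add_zero]
  have hσ := h (res x ρ.length) (hx ρ.length) (res_length _ _)
  refine disjoint_left.mp hσ.2.2 ?_ hm
  show res m _ = _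
  rw [finAdd_length, res_length, min_self, hmx, res_add, hy]

end Killing

lemma eventually_forall_exists_disjoint_cyl {M : Set Cantor} (hM : IsNowhereDense M) (m : ℕ) :
    ∀ᶠ L in atTop, ∀ π : FinSeq, π.length = m →
      ∃ τ, π <+: τ ∧ τ.length = L ∧ Disjoint (cyl τ) M := by
  refine ((List.finite_length_eq _ m).eventually_all).mpr fun π _ => ?_
  obtain ⟨τ₀, hπτ₀, hτ₀⟩ := isNowhereDense_iff_exists_disjoint_cyl.mp hM π
  filter_upwards [eventually_ge_atTop τ₀.length] with L hL
  obtain ⟨τ, hτ₀τ, hτlen⟩ := exists_prefix_length_eq τ₀ hL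
  exact ⟨τ, hπτ₀.trans hτ₀τ, hτlen, hτ₀.mono_left (cyl_anti hτ₀τ)⟩

lemma exists_strictMono_forall_le {P : ℕ → ℕ → ℕ → Prop} (hP : ∀ j m, ∀ᶠ L in atTop, P j m L) :
    ∃ n : ℕ → ℕ, StrictMono n ∧ ∀ j k, j ≤ k → P j (n k) (n (k + 1)) := by
  have hnext : ∀ k m, ∃ L, m < L ∧ ∀ j ≤ k, P j m L := fun k m =>
    ((eventually_gt_atTop m).and ((finite_Iic k).eventually_all.mpr fun j _ => hP j m)).exists
  choose next hnext_gt hnext_P using hnext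
  let n : ℕ → ℕ := fun k => Nat.rec 0 (fun k nk => next k nk) k
  exact ⟨n, strictMono_nat_of_lt_succ fun k => hnext_gt k (n k),
    fun j k hjk => hnext_P k (n k) j hjk⟩

lemma exists_corset_le_half {n : ℕ → ℕ} (hn : StrictMono n) :
    ∃ f, Corset f ∧ ∀ k, f (n k) ≤ k / 2 + 1 := by
  refine ⟨fun m => Nat.findGreatest (fun k => n (2 * k) ≤ m) m + 1, ⟨?_, ?_, ?_⟩, ?_⟩
  · exact fun a b hab => Nat.add_le_add_right
      (Nat.findGreatest_mono (fun k hk => hk.trans hab) hab) 1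
  · exact fun m => Nat.succ_pos _
  · refine tendsto_atTop_atTop.mpr fun b => ⟨n (2 * b), fun m hm => ?_⟩
    have hb : b ≤ m := (show b ≤ 2 * b by omega).trans ((hn.id_le _).trans hm)
    exact (Nat.le_findGreatest hb hm).trans (Nat.le_succ _)
  · intro k
    simp only [Nat.add_le_add_iff_right]
    rcases hg : Nat.findGreatest (fun k' => n (2 * k') ≤ n k) (n k) with _ | g
    · exact Nat.zero_le _
    · have h : n (2 * (g + 1)) ≤ n k :=
        Nat.findGreatest_of_ne_zero (P := fun k' => n (2 * k') ≤ n k) hg (Nat.succ_ne_zero g)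
      have := hn.le_iff_le.mp h
      omega

/-- After `k₀` the checkpoints `n k` leave room for `k₀ + 3` killing rounds before the width
`f (n (2 * k₀ + 3)) ≤ k₀ + 2` of `S` runs out. -/
lemma isNowhereDense_limT_add {S : Set FinSeq} {M : Set Cantor} {f n : ℕ → ℕ} {j : ℕ}
    (hS : IsTree S) (hwidth : almostWidthLe S f) (hn : StrictMono n)
    (hfn : ∀ k, f (n k) ≤ k / 2 + 1)
    (hext : ∀ k, j ≤ k → ∀ π : FinSeq, π.length = n k →
      ∃ τ, π <+: τ ∧ τ.length = n (k + 1) ∧ Disjoint (cyl τ) M) :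
    IsNowhereDense (LimT S + M) := by
  refine isNowhereDense_iff_exists_disjoint_cyl.mpr fun ρ₀ => ?_
  obtain ⟨K, hK⟩ := eventually_atTop.mp hwidth
  set k₀ := j + ρ₀.length + K
  obtain ⟨ρ₁, hρ₀ρ₁, hρ₁len⟩ := exists_prefix_length_eq ρ₀
    ((show ρ₀.length ≤ k₀ by omega).trans (hn.id_le k₀))
  have hsmall : {σ ∈ S | σ.length = n (k₀ + (k₀ + 3))}.ncard < k₀ + 3 := by
    have h₁ := hK _ ((show K ≤ k₀ + (k₀ + 3) by omega).trans (hn.id_le _))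
    have h₂ := hfn (k₀ + (k₀ + 3))
    omega
  obtain ⟨ρ, hρ₁ρ, -, hρ⟩ := exists_prefix_killsAll hS hn
    (fun k hk => hext k (by omega)) hsmall hρ₁len
  exact ⟨ρ, hρ₀ρ₁.trans hρ₁ρ, hρ.disjoint_cyl_limT_add⟩

lemma IsMeagre.exists_nat_isNowhereDense {X : Type*} [TopologicalSpace X] {s : Set X}
    (hs : IsMeagre s) : ∃ M : ℕ → Set X, (∀ j, IsNowhereDense (M j)) ∧ s ⊆ ⋃ j, M j := by
  obtain ⟨𝒮, h𝒮, hcount, hs𝒮⟩ := isMeagre_iff_countable_union_isNowhereDense.mp hs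
  obtain ⟨M, hM⟩ := (hcount.insert ∅).exists_eq_range (insert_nonempty _ _)
  refine ⟨M, fun j => ?_, hs𝒮.trans (sUnion_subset fun t ht => ?_)⟩
  · rcases (hM ▸ mem_range_self j : M j ∈ insert ∅ 𝒮) with h | h
    · exact h ▸ isNowhereDense_empty
    · exact h𝒮 _ h
  · obtain ⟨j, rfl⟩ : t ∈ range M := hM ▸ mem_insert_of_mem _ ht
    exact subset_iUnion M j

/-- If `y` and `x` agree from `N` on, then `y = extendZero ((y + x)↾N) + x`. -/
lemma finEq_subset_iUnion_vadd (A : Set Cantor) : finEq A ⊆ ⋃ ρ : FinSeq, extendZero ρ +ᵥ A := by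
  rintro y ⟨x, hx, hyx⟩
  obtain ⟨N, hN⟩ := eventually_atTop.mp hyx
  refine mem_iUnion.mpr ⟨res (y + x) N, x, hx, funext fun i => ?_⟩
  show extendZero (res (y + x) N) i + x i = y i
  rcases lt_or_ge i N with hi | hi
  · simp [extendZero, res, hi, add_assoc, CharTwo.add_self_eq_zero]
  · simp [extendZero, res, hi, hN i hi]

lemma isMeagre_finEq_add {B C : Set Cantor} (h : IsMeagre (B + C)) : IsMeagre (finEq B + C) := by
  refine (isMeagre_iUnion fun ρ : FinSeq => ?_).mono
    ((add_subset_add_right (finEq_subset_iUnion_vadd B)).trans_eq (iUnion_add _ _))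
  rw [vadd_add_assoc, ← image_vadd]
  exact (Homeomorph.addLeft (extendZero ρ)).isInducing.isMeagre_image h

/-- every set satisfying condition (c) of Theorem 13 is meager-additive. -/
theorem stmt18 (X : Set Cantor)
    (h : ∀ f : ℕ → ℕ, Corset f → ∃ S : ℕ → Set FinSeq,
      (∀ m, IsTree (S m) ∧ almostWidthLe (S m) f) ∧ X ⊆ ⋃ m, finEq (LimT (S m))) :
    MeagerAdditive X := by
  intro A hA
  obtain ⟨M, hM, hAM⟩ := hA.exists_nat_isNowhereDense
  obtain ⟨n, hn, hext⟩ :=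
    exists_strictMono_forall_le fun j m => eventually_forall_exists_disjoint_cyl (hM j) m
  obtain ⟨f, hf, hfn⟩ := exists_corset_le_half hn
  obtain ⟨S, hS, hXS⟩ := h f hf
  have hcover : X + A ⊆ ⋃ j, ⋃ m, finEq (LimT (S m)) + M j := by
    simpa only [iUnion_add, add_iUnion] using add_subset_add hXS hAM
  refine (isMeagre_iUnion fun j => isMeagre_iUnion fun m => isMeagre_finEq_add ?_).mono hcover
  exact (isNowhereDense_limT_add (hS m).1 (hS m).2 hn hfn (hext j)).isMeagre
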